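/- arXiv:2006.02403 — 3 statements merged into one kernel-verified Lean document; each statement's English description precedes it below -/
import Mathlib

section
/- Let R be an integral domain, r a natural number, and f, g ∈ R[ℤ^r] Laurent polynomials. Then the Newton polytope of the product satisfies N(f·g) = N(f) + N(g), where + denotes the Minkowski sum of subsets of ℝ^r. -/
open Pointwise

/-- The canonical embedding `ℤ^r → ℝ^r`. -/
noncomputable def latticeEmbed {r : ℕ} (l : Fin r → ℤ) : Fin r → ℝ :=
  fun i => (l i : ℝ)

/-- The Newton polytope of a Laurent polynomial `f ∈ R[ℤ^r]`: the convex hull in `ℝ^r`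
of the (images of the) exponents with nonzero coefficient. -/
noncomputable def newtonPolytope {R : Type*} [CommRing R] {r : ℕ}
    (f : AddMonoidAlgebra R (Fin r → ℤ)) : Set (Fin r → ℝ) :=
  convexHull ℝ (latticeEmbed '' (f.coeff.support : Set (Fin r → ℤ)))

/-!
`N(f) + N(g)` is the convex hull of `supp f + supp g`, which contains `supp (f * g)`.
Conversely, a vertex `a + b` of it has no second decomposition `a' + b'` over the supports,
for it would then be the midpoint of `a + b'` and `a' + b`. So the coefficient of `f * g` at
`a + b` is `f_a * g_b ≠ 0`: every vertex is an exponent of `f * g`, and by Krein–Milman the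
polytope is the convex hull of its vertices.
-/

section Convex

variable {𝕜 E : Type*} [Field 𝕜] [LinearOrder 𝕜] [IsStrictOrderedRing 𝕜]
  [AddCommGroup E] [Module 𝕜 E]

theorem eq_and_eq_of_add_mem_extremePoints_add {A B : Set E} {a a' b b' : E}
    (ha : a ∈ A) (ha' : a' ∈ A) (hb : b ∈ B) (hb' : b' ∈ B)
    (hext : a + b ∈ (A + B).extremePoints 𝕜) (h : a' + b' = a + b) : a' = a ∧ b' = b := by
  have hmid : a + b ∈ openSegment 𝕜 (a + b') (a' + b) := by
    refine ⟨1 / 2, 1 / 2, by norm_num, by norm_num, by norm_num, ?_⟩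
    have hsum : (a + b') + (a' + b) = (2 : 𝕜) • (a + b) := by
      rw [show (a + b') + (a' + b) = (a' + b') + (a + b) by abel, h, two_smul]
    rw [← smul_add, hsum, smul_smul]
    norm_num
  have hb' : b' = b :=
    add_left_cancel (hext.2 (Set.add_mem_add ha hb') (Set.add_mem_add ha' hb) hmid)
  subst hb'
  exact ⟨add_right_cancel h, rfl⟩

theorem UniqueAdd.of_map_add_mem_extremePoints {G : Type*} [Add G] {φ : G →ₙ+ E}
    (hφ : Function.Injective φ) {A B : Finset G} {a b : G}
    (ha : a ∈ A) (hb : b ∈ B) (hext : φ a + φ b ∈ (φ '' A + φ '' B).extremePoints 𝕜) :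
    UniqueAdd A B a b := fun a' b' ha' hb' hab ↦
  have hφab := eq_and_eq_of_add_mem_extremePoints_add (Set.mem_image_of_mem φ ha)
    (Set.mem_image_of_mem φ ha') (Set.mem_image_of_mem φ hb) (Set.mem_image_of_mem φ hb') hext
    (by rw [← map_add, hab, map_add])
  ⟨hφ hφab.1, hφ hφab.2⟩

end Convex

theorem convexHull_eq_of_subset_of_extremePoints_subset {E : Type*} [AddCommGroup E]
    [Module ℝ E] [TopologicalSpace E] [T2Space E] [IsTopologicalAddGroup E]
    [ContinuousSMul ℝ E] [LocallyConvexSpace ℝ E] {s t : Set E} (hs : s.Finite) (hts : t ⊆ s)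
    (hext : (convexHull ℝ s).extremePoints ℝ ⊆ t) : convexHull ℝ t = convexHull ℝ s := by
  refine (convexHull_mono hts).antisymm ?_
  calc convexHull ℝ s = closure (convexHull ℝ ((convexHull ℝ s).extremePoints ℝ)) :=
        (closure_convexHull_extremePoints (hs.isCompact_convexHull ℝ)
          (convex_convexHull ℝ s)).symm
    _ ⊆ closure (convexHull ℝ t) := closure_mono (convexHull_mono hext)
    _ = convexHull ℝ t := ((hs.subset hts).isClosed_convexHull ℝ).closure_eq

namespace AddMonoidAlgebra

variable {R G : Type*} [Semiring R] [NoZeroDivisors R] [Add G]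

theorem add_mem_support_coeff_mul_of_uniqueAdd {f g : AddMonoidAlgebra R G} {a b : G}
    (ha : a ∈ f.coeff.support) (hb : b ∈ g.coeff.support)
    (h : UniqueAdd f.coeff.support g.coeff.support a b) : a + b ∈ (f * g).coeff.support := by
  rw [Finsupp.mem_support_iff, coeff_mul_add_of_uniqueAdd h]
  exact mul_ne_zero (Finsupp.mem_support_iff.1 ha) (Finsupp.mem_support_iff.1 hb)

theorem convexHull_image_support_coeff_mul {E : Type*} [AddCommGroup E] [Module ℝ E]
    [TopologicalSpace E] [T2Space E] [IsTopologicalAddGroup E] [ContinuousSMul ℝ E]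
    [LocallyConvexSpace ℝ E] {φ : G →ₙ+ E} (hφ : Function.Injective φ)
    (f g : AddMonoidAlgebra R G) :
    convexHull ℝ (φ '' (f * g).coeff.support) =
      convexHull ℝ (φ '' f.coeff.support) + convexHull ℝ (φ '' g.coeff.support) := by
  classical
  have hsupp : φ '' ↑(f.coeff.support + g.coeff.support) =
      φ '' f.coeff.support + φ '' g.coeff.support := by
    rw [Finset.coe_add, Set.image_add]
  rw [← convexHull_add, ← hsupp]
  refine convexHull_eq_of_subset_of_extremePoints_subset (Set.toFinite _)
    (Set.image_mono (support_coeff_mul_subset f g)) fun v hv ↦ ?_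
  have hv' : v ∈ (φ '' f.coeff.support + φ '' g.coeff.support).extremePoints ℝ := by
    rw [← hsupp]
    exact inter_extremePoints_subset_extremePoints_of_subset (subset_convexHull ℝ _)
      ⟨extremePoints_convexHull_subset hv, hv⟩
  obtain ⟨_, ⟨a, ha, rfl⟩, _, ⟨b, hb, rfl⟩, rfl⟩ := hv'.1
  exact ⟨a + b, add_mem_support_coeff_mul_of_uniqueAdd ha hb
    (.of_map_add_mem_extremePoints hφ ha hb hv'), map_add φ a b⟩

end AddMonoidAlgebra

noncomputable def latticeEmbedAddHom {r : ℕ} : (Fin r → ℤ) →ₙ+ (Fin r → ℝ) where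
  toFun := latticeEmbed
  map_add' a b := by funext i; simp [latticeEmbed]

theorem latticeEmbed_injective {r : ℕ} : Function.Injective (latticeEmbed (r := r)) :=
  fun _ _ h ↦ funext fun i ↦ Int.cast_injective (congrFun h i)

theorem newtonPolytope_mul_of_domain {R : Type*} [CommRing R] [IsDomain R] {r : ℕ}
    (f g : AddMonoidAlgebra R (Fin r → ℤ)) :
    newtonPolytope (f * g) = newtonPolytope f + newtonPolytope g :=
  AddMonoidAlgebra.convexHull_image_support_coeff_mul (φ := latticeEmbedAddHom)
    latticeEmbed_injective f g
end

section
/- Let R be a commutative ring and f ∈ R[ℤ^r] a Laurent polynomial. Then there exist finitely many nonzero vectors d₁, …, d_k ∈ ℤ^r such that for every w ∈ ℤ^r with ⟨w, dᵢ⟩ ≠ 0 for all i (i.e., w outside the finite union of hyperplanes {x ∈ ℝ^r : ⟨x, dᵢ⟩ = 0}), the Laurent polynomial f_w ∈ R[ℤ] obtained from f by transporting exponents along the group homomorphism λ ↦ ⟨w, λ⟩ (mapDomain) satisfies N(f_w) = π_w(N(f)), where π_w : ℝ^r → ℝ is the linear map x ↦ ⟨w, x⟩ and N(f_w) is viewed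 as a subset of ℝ. -/
/-- The Newton polytope of a one-variable Laurent polynomial `f ∈ R[ℤ]`, as a subset of `ℝ`. -/
noncomputable def newtonPolytope₁ {R : Type*} [CommRing R]
    (f : AddMonoidAlgebra R ℤ) : Set ℝ :=
  convexHull ℝ ((fun n : ℤ => (n : ℝ)) '' (f.coeff.support : Set ℤ))

/-- Restriction of exponents along the pairing with `w ∈ ℤ^r`: the one-variable Laurent
polynomial obtained from `f` by transporting exponents along `λ ↦ ⟨w, λ⟩`. -/
noncomputable def restrictExponents {R : Type*} [CommRing R] {r : ℕ}
    (w : Fin r → ℤ) (f : AddMonoidAlgebra R (Fin r → ℤ)) : AddMonoidAlgebra R ℤ :=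
  AddMonoidAlgebra.ofCoeff (Finsupp.mapDomain (fun l : Fin r → ℤ => ∑ i, w i * l i) f.coeff)

/-! For `w` that pairs nonzero with every difference of two distinct exponents of `f`, the map
`λ ↦ ⟨w, λ⟩` is injective on `supp f`, so no coefficients cancel when exponents are transported
along it: `supp f_w` is exactly the image of `supp f`. Convex hulls commute with linear maps,
so `N(f_w)` is the image of `N(f)`. -/

open Finset
open scoped Pointwise

theorem AddMonoidHom.injOn_of_map_ne_zero {G H : Type*} [AddGroup G] [AddGroup H]
    [DecidableEq G] (φ : G →+ H) {s : Finset G} (h : ∀ d ∈ (s - s).erase 0, φ d ≠ 0) :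
    Set.InjOn φ s := by
  intro a ha b hb hab
  by_contra hne
  refine h (a - b) (mem_erase.2 ⟨sub_ne_zero.2 hne, sub_mem_sub ha hb⟩) ?_
  rw [map_sub, hab, sub_self]

section Restriction

variable {R : Type*} [CommRing R] {r : ℕ} {w : Fin r → ℤ} {f : AddMonoidAlgebra R (Fin r → ℤ)}

theorem support_restrictExponents_of_injOn (h : Set.InjOn (w ⬝ᵥ ·) f.coeff.support) :
    (restrictExponents w f).coeff.support = f.coeff.support.image (w ⬝ᵥ ·) :=
  Finsupp.mapDomain_support_of_injOn f.coeff h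

theorem newtonPolytope₁_restrictExponents_of_injOn (h : Set.InjOn (w ⬝ᵥ ·) f.coeff.support) :
    newtonPolytope₁ (restrictExponents w f)
      = (fun x : Fin r → ℝ => ∑ i, (w i : ℝ) * x i) '' newtonPolytope f := by
  have hlin : IsLinearMap ℝ (fun x : Fin r → ℝ => ∑ i, (w i : ℝ) * x i) :=
    (dotProductBilin ℝ ℝ fun i => (w i : ℝ)).isLinear
  rw [newtonPolytope₁, newtonPolytope, hlin.image_convexHull,
    support_restrictExponents_of_injOn h, coe_image, ← Set.image_comp, ← Set.image_comp]
  congr 1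
  refine Set.image_congr fun l _ => ?_
  simp [dotProduct, latticeEmbed]

end Restriction

/-- For all `w` outside a finite union of integral hyperplanes, the Newton polytope of the
restriction of `f` along `w` is the projection of the Newton polytope of `f`. -/
theorem newtonPolytope_restrictExponents_generic {R : Type*} [CommRing R] {r : ℕ}
    (f : AddMonoidAlgebra R (Fin r → ℤ)) :
    ∃ (k : ℕ) (d : Fin k → (Fin r → ℤ)), (∀ i, d i ≠ 0) ∧
      ∀ w : Fin r → ℤ, (∀ i, (∑ j, w j * d i j) ≠ 0) →
        newtonPolytope₁ (restrictExponents w f)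
          = (fun x : Fin r → ℝ => ∑ i, (w i : ℝ) * x i) '' newtonPolytope f := by
  set D := (f.coeff.support - f.coeff.support).erase 0
  refine ⟨D.card, fun i => D.equivFin.symm i, fun i => ne_of_mem_erase (D.equivFin.symm i).2,
    fun w hw => newtonPolytope₁_restrictExponents_of_injOn ?_⟩
  refine (dotProductBilin ℤ ℤ w).toAddMonoidHom.injOn_of_map_ne_zero fun d hd => ?_
  simpa [dotProduct] using hw (D.equivFin ⟨d, hd⟩)
end

section
/- Let S, T ⊆ ℝⁿ be nonempty finite sets and set P = conv(S), Q = conv(T). Then every extreme point w of the Minkowski sum P + Q admits a unique decomposition w = p + q with p ∈ P and q ∈ Q; moreover, in this decomposition p is an extreme point of P and q is an extreme point of Q. -/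
open Pointwise

/-! If `w = p + q` is extreme in `P + Q`, moving `q` along a segment inside `Q` moves `w` along a
segment inside `P + Q`, so `q` (and likewise `p`) is extreme. For uniqueness, if also
`w = p' + q'`, then `w` is the midpoint of `p + q'` and `p' + q`, both in `P + Q`. -/

section ExtremePointsAdd

variable {𝕜 E : Type*} [AddCommGroup E] {s t : Set E} {p q : E}

theorem mem_extremePoints_of_add_mem_extremePoints_add_right [Ring 𝕜] [PartialOrder 𝕜]
    [AddRightMono 𝕜] [Module 𝕜 E] (hpq : p + q ∈ (s + t).extremePoints 𝕜) (hp : p ∈ s)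
    (hq : q ∈ t) : q ∈ t.extremePoints 𝕜 := by
  refine ⟨hq, fun x₁ hx₁ x₂ hx₂ hx ↦ ?_⟩
  have hpx := hpq.2 (Set.add_mem_add hp hx₁) (Set.add_mem_add hp hx₂)
    ((mem_openSegment_translate 𝕜 p).2 hx)
  exact add_left_cancel hpx

theorem mem_extremePoints_of_add_mem_extremePoints_add_left [Ring 𝕜] [PartialOrder 𝕜]
    [AddRightMono 𝕜] [Module 𝕜 E] (hpq : p + q ∈ (s + t).extremePoints 𝕜) (hp : p ∈ s)
    (hq : q ∈ t) : p ∈ s.extremePoints 𝕜 := by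
  rw [add_comm s, add_comm p] at hpq
  exact mem_extremePoints_of_add_mem_extremePoints_add_right hpq hq hp

theorem eq_and_eq_of_add_eq_of_add_mem_extremePoints_add [Ring 𝕜] [LinearOrder 𝕜]
    [IsStrictOrderedRing 𝕜] [Invertible (2 : 𝕜)] [Module 𝕜 E]
    (hpq : p + q ∈ (s + t).extremePoints 𝕜) (hp : p ∈ s) (hq : q ∈ t) {p' q' : E}
    (hp' : p' ∈ s) (hq' : q' ∈ t) (h : p' + q' = p + q) : p' = p ∧ q' = q := by
  have hmid : p + q ∈ openSegment 𝕜 (p + q') (p' + q) := by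
    convert mem_openSegment_add_sub (𝕜 := 𝕜) (p + q) (q' - q) using 2
    · abel
    · rw [← sub_eq_iff_eq_add.2 h.symm]; abel
  obtain rfl : q' = q :=
    add_left_cancel (hpq.2 (Set.add_mem_add hp hq') (Set.add_mem_add hp' hq) hmid)
  exact ⟨add_right_cancel h, rfl⟩

end ExtremePointsAdd

theorem extremePoint_minkowski_sum_unique_decomposition_general {n : ℕ}
    (P Q : Set (Fin n → ℝ)) :
    ∀ w ∈ Set.extremePoints ℝ (P + Q),
      ∃ p q : Fin n → ℝ,
        p ∈ Set.extremePoints ℝ P ∧ q ∈ Set.extremePoints ℝ Q ∧ w = p + q ∧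
        ∀ p' q' : Fin n → ℝ, p' ∈ P → q' ∈ Q → w = p' + q' → p' = p ∧ q' = q := by
  intro w hw
  obtain ⟨p, hp, q, hq, rfl⟩ := extremePoints_subset hw
  exact ⟨p, q, mem_extremePoints_of_add_mem_extremePoints_add_left hw hp hq,
    mem_extremePoints_of_add_mem_extremePoints_add_right hw hp hq, rfl,
    fun p' q' hp' hq' h ↦
      eq_and_eq_of_add_eq_of_add_mem_extremePoints_add hw hp hq hp' hq' h.symm⟩

/-- Every extreme point of a Minkowski sum of two polytopes `P = conv S`, `Q = conv T`
decomposes uniquely as `p + q` with `p ∈ P`, `q ∈ Q`; moreover `p` is an extreme point of `P`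
and `q` is an extreme point of `Q`. -/
theorem extremePoint_minkowski_sum_unique_decomposition {n : ℕ}
    (S T : Finset (Fin n → ℝ)) (hS : S.Nonempty) (hT : T.Nonempty)
    (P Q : Set (Fin n → ℝ))
    (hP : P = convexHull ℝ (S : Set (Fin n → ℝ)))
    (hQ : Q = convexHull ℝ (T : Set (Fin n → ℝ))) :
    ∀ w ∈ Set.extremePoints ℝ (P + Q),
      ∃ p q : Fin n → ℝ,
        p ∈ Set.extremePoints ℝ P ∧ q ∈ Set.extremePoints ℝ Q ∧ w = p + q ∧
        ∀ p' q' : Fin n → ℝ, p' ∈ P → q' ∈ Q → w = p' + q' → p' = p ∧ q' = q :=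
  extremePoint_minkowski_sum_unique_decomposition_general P Q
end
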